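/- For every operation f in the set {constant 0, constant 1, ∧, ∨, Maj, Minor} on the Boolean domain, there exists an infinite regular language L_f ⊆ {0,1}* such that f is a polymorphism of L_f (i.e., L_f is closed under coordinatewise application of f to equal-length words) and no other operation in the set is a polymorphism of L_f. -/
import Mathlib

/-- The six operations of Schaefer's theorem on the Boolean domain. -/
inductive BOp : Type
  | c0 | c1 | and | or | maj | minor
deriving DecidableEq

/-- `BooleanPoly f L`: the language `L ⊆ {0,1}*` is closed under coordinatewise
application of the operation `f` to equal-length words. -/
def BooleanPoly : BOp → Set (List Bool) → Prop
  | .c0, L => ∀ w ∈ L, w.map (fun _ => false) ∈ L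
  | .c1, L => ∀ w ∈ L, w.map (fun _ => true) ∈ L
  | .and, L => ∀ x ∈ L, ∀ y ∈ L, x.length = y.length →
      List.zipWith (· && ·) x y ∈ L
  | .or, L => ∀ x ∈ L, ∀ y ∈ L, x.length = y.length →
      List.zipWith (· || ·) x y ∈ L
  | .maj, L => ∀ x ∈ L, ∀ y ∈ L, ∀ z ∈ L, x.length = y.length → y.length = z.length →
      List.zipWith (fun a p => (a && p.1) || (a && p.2) || (p.1 && p.2)) x (y.zip z) ∈ L
  | .minor, L => ∀ x ∈ L, ∀ y ∈ L, ∀ z ∈ L, x.length = y.length → y.length = z.length →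
      List.zipWith (fun a p => xor (xor a p.1) p.2) x (y.zip z) ∈ L

/-! ### Block languages -/

def blockOk (S : Bool → Bool → Bool → Bool) : List Bool → Bool
  | [] => true
  | a :: b :: c :: r => S a b c && blockOk S r
  | _ => false

def headLang (h : Bool) (S : Bool → Bool → Bool → Bool) : List Bool → Bool
  | [] => false
  | a :: r => (a == h) && blockOk S r

inductive BSt | start | b0 | b1 (a : Bool) | b2 (a b : Bool) | dead
deriving DecidableEq, Fintype

def dfaOf (S : Bool → Bool → Bool → Bool) (h : Bool) (st : BSt) : DFA Bool BSt where
  step s a := match s with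
    | .start => if a = h then .b0 else .dead
    | .b0 => .b1 a
    | .b1 x => .b2 x a
    | .b2 x y => if S x y a then .b0 else .dead
    | .dead => .dead
  start := st
  accept := {s | s = .b0}

lemma evalFrom_dead (S h st) : ∀ w, (dfaOf S h st).evalFrom .dead w = .dead
  | [] => rfl
  | _ :: r => evalFrom_dead S h st r

lemma evalFrom_b0 (S h st) : ∀ w, ((dfaOf S h st).evalFrom .b0 w = .b0 ↔ blockOk S w = true)
  | [] => by simp [DFA.evalFrom, blockOk]
  | [a] => by simp [DFA.evalFrom, blockOk, dfaOf]
  | [a, b] => by simp [DFA.evalFrom, blockOk, dfaOf]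
  | a :: b :: c :: r => by
    have h1 : (dfaOf S h st).evalFrom .b0 (a :: b :: c :: r)
        = (dfaOf S h st).evalFrom (if S a b c then .b0 else .dead) r := rfl
    rw [h1]
    by_cases hs : S a b c = true
    · simp only [hs, if_true, evalFrom_b0 S h st r, blockOk, Bool.true_and]
    · simp only [Bool.not_eq_true] at hs
      simp [hs, evalFrom_dead, blockOk]

lemma accepts_block (S h) (w : List Bool) :
    (w ∈ (dfaOf S h .b0).accepts ↔ blockOk S w = true) := by
  rw [DFA.mem_accepts]
  exact evalFrom_b0 S h .b0 w

lemma accepts_head (S) (h : Bool) (w : List Bool) :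
    (w ∈ (dfaOf S h .start).accepts ↔ headLang h S w = true) := by
  rw [DFA.mem_accepts]
  match w with
  | [] => simp [DFA.eval, DFA.evalFrom, headLang, dfaOf]
  | a :: r =>
    have h1 : (dfaOf S h .start).eval (a :: r)
        = (dfaOf S h .start).evalFrom (if a = h then .b0 else .dead) r := rfl
    rw [h1]
    by_cases ha : a = h
    · simp only [ha, if_true, headLang, beq_self_eq_true, Bool.true_and]
      exact evalFrom_b0 S h .start r
    · simp only [ha, if_false, evalFrom_dead, headLang]
      simp [dfaOf, ha]

/-! ### Closure lemmas -/

lemma blockOk_map (S : Bool → Bool → Bool → Bool) (k : Bool) (hS : S k k k = true) :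
    ∀ w, blockOk S w = true → blockOk S (w.map fun _ => k) = true
  | [], _ => rfl
  | [a], hw => by simp [blockOk] at hw
  | [a, b], hw => by simp [blockOk] at hw
  | a :: b :: c :: r, hw => by
    simp only [blockOk, Bool.and_eq_true] at hw
    simp only [List.map, blockOk, Bool.and_eq_true]
    exact ⟨hS, blockOk_map S k hS r hw.2⟩

lemma blockOk_zip2 (S : Bool → Bool → Bool → Bool) (op : Bool → Bool → Bool)
    (hS : ∀ a b c a' b' c', S a b c = true → S a' b' c' = true →
      S (op a a') (op b b') (op c c') = true) :
    ∀ x y, x.length = y.length → blockOk S x = true → blockOk S y = true →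
      blockOk S (List.zipWith op x y) = true
  | [], y, hl, _, _ => by
    have : y = [] := List.length_eq_zero_iff.mp hl.symm
    subst this; rfl
  | [a], _, _, hx, _ => by simp [blockOk] at hx
  | [a, b], _, _, hx, _ => by simp [blockOk] at hx
  | a :: b :: c :: r, y, hl, hx, hy => by
    obtain ⟨a', b', c', r', rfl⟩ : ∃ a' b' c' r', y = a' :: b' :: c' :: r' := by
      match y with
      | a' :: b' :: c' :: r' => exact ⟨_, _, _, _, rfl⟩
      | [] | [_] | [_, _] => simp at hl
    simp only [blockOk, Bool.and_eq_true] at hx hy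
    simp only [List.zipWith, blockOk, Bool.and_eq_true]
    exact ⟨hS _ _ _ _ _ _ hx.1 hy.1,
      blockOk_zip2 S op hS r r' (by simpa using hl) hx.2 hy.2⟩

lemma blockOk_zip3 (S : Bool → Bool → Bool → Bool) (g : Bool → Bool → Bool → Bool)
    (hS : ∀ a b c a' b' c' a'' b'' c'', S a b c = true → S a' b' c' = true →
      S a'' b'' c'' = true → S (g a a' a'') (g b b' b'') (g c c' c'') = true) :
    ∀ x y z, x.length = y.length → y.length = z.length →
      blockOk S x = true → blockOk S y = true → blockOk S z = true →
      blockOk S (List.zipWith (fun a p => g a p.1 p.2) x (y.zip z)) = true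
  | [], y, z, hl, _, _, _, _ => by
    have : y = [] := List.length_eq_zero_iff.mp hl.symm
    subst this; rfl
  | [a], _, _, _, _, hx, _, _ => by simp [blockOk] at hx
  | [a, b], _, _, _, _, hx, _, _ => by simp [blockOk] at hx
  | a :: b :: c :: r, y, z, hl1, hl2, hx, hy, hz => by
    obtain ⟨a', b', c', r', rfl⟩ : ∃ a' b' c' r', y = a' :: b' :: c' :: r' := by
      match y with
      | a' :: b' :: c' :: r' => exact ⟨_, _, _, _, rfl⟩
      | [] | [_] | [_, _] => simp at hl1
    obtain ⟨a'', b'', c'', r'', rfl⟩ : ∃ a'' b'' c'' r'', z = a'' :: b'' :: c'' :: r'' := by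
      match z with
      | a'' :: b'' :: c'' :: r'' => exact ⟨_, _, _, _, rfl⟩
      | [] | [_] | [_, _] => simp at hl2
    simp only [blockOk, Bool.and_eq_true] at hx hy hz
    simp only [List.zip, List.zipWith, blockOk, Bool.and_eq_true]
    exact ⟨hS _ _ _ _ _ _ _ _ _ hx.1 hy.1 hz.1,
      blockOk_zip3 S g hS r r' r'' (by simpa using hl1) (by simpa using hl2) hx.2 hy.2 hz.2⟩

/-! ### Infinite families -/

def rep3 (p q r : Bool) : ℕ → List Bool
  | 0 => []
  | n + 1 => p :: q :: r :: rep3 p q r n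

lemma rep3_length (p q r : Bool) : ∀ n, (rep3 p q r n).length = 3 * n
  | 0 => rfl
  | n + 1 => by simp [rep3, rep3_length p q r n]; ring

lemma rep3_blockOk (S) (p q r : Bool) (h : S p q r = true) :
    ∀ n, blockOk S (rep3 p q r n) = true
  | 0 => rfl
  | n + 1 => by simp [rep3, blockOk, h, rep3_blockOk S p q r h n]

lemma Lblock_infinite (S) (p q r : Bool) (h : S p q r = true) :
    {w | blockOk S w = true}.Infinite := by
  apply Set.infinite_of_injective_forall_mem (f := fun n => rep3 p q r n)
  · intro m n hmn
    have := congrArg List.length hmn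
    simp only [rep3_length] at this
    omega
  · intro n
    exact rep3_blockOk S p q r h n

lemma Lhead_infinite (S) (hd p q r : Bool) (h : S p q r = true) :
    {w | headLang hd S w = true}.Infinite := by
  apply Set.infinite_of_injective_forall_mem (f := fun n => hd :: rep3 p q r n)
  · intro m n hmn
    have := congrArg List.length hmn
    simp only [List.length_cons, rep3_length] at this
    omega
  · intro n
    simp only [Set.mem_setOf_eq, headLang, beq_self_eq_true, Bool.true_and]
    exact rep3_blockOk S p q r h n

/-! ### Parity language (for minority) -/

def parDFA : DFA Bool Bool where
  step s a := xor s a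
  start := false
  accept := {s | s = true}

lemma xor_shuffle : ∀ b1 b2 b3 a a' a'' : Bool,
    xor (xor (xor b1 b2) b3) (xor (xor a a') a'')
      = xor (xor (xor b1 a) (xor b2 a')) (xor b3 a'') := by decide

lemma foldl_xor3 : ∀ (x y z : List Bool), x.length = y.length → y.length = z.length →
    ∀ (b1 b2 b3 : Bool),
    List.foldl xor (xor (xor b1 b2) b3)
      (List.zipWith (fun a p => xor (xor a p.1) p.2) x (y.zip z))
      = xor (xor (List.foldl xor b1 x) (List.foldl xor b2 y)) (List.foldl xor b3 z)
  | [], y, z, hl1, hl2 => by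
    have hy : y = [] := List.length_eq_zero_iff.mp hl1.symm
    subst hy
    have hz : z = [] := List.length_eq_zero_iff.mp hl2.symm
    subst hz
    intro b1 b2 b3; rfl
  | a :: x, y, z, hl1, hl2 => by
    obtain ⟨a', y, rfl⟩ : ∃ a' y', y = a' :: y' := by
      match y with
      | a' :: y' => exact ⟨_, _, rfl⟩
      | [] => simp at hl1
    obtain ⟨a'', z, rfl⟩ : ∃ a'' z', z = a'' :: z' := by
      match z with
      | a'' :: z' => exact ⟨_, _, rfl⟩
      | [] => simp at hl2
    intro b1 b2 b3
    simp only [List.zip, List.zipWith, List.foldl]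
    rw [xor_shuffle]
    exact foldl_xor3 x y z (by simpa using hl1) (by simpa using hl2) _ _ _

/-! ### The six condition tables -/

def Smaj (a b c : Bool) : Bool := (!a && !b && c) || (!a && b && !c) || (a && b && !c)
def S0 (a b c : Bool) : Bool := (!a && !b && !c) || (!a && b && c) || (a && !b && c)
def S1 (a b c : Bool) : Bool := (a && b && c) || (a && !b && !c) || (!a && b && !c)
def Sand (a b c : Bool) : Bool := !(a && b && c)
def Sor (a b c : Bool) : Bool := a || b || c

/-! ### Main theorem -/

/-- For each of the six Schaefer operations `f` there is an infinite regular language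
over `{0,1}` having `f` as a polymorphism and admitting no other of the six operations
as a polymorphism. -/
theorem stmt15 (f : BOp) :
    ∃ L : Set (List Bool), L.Infinite ∧
      (∃ (σ : Type) (_ : Fintype σ) (M : DFA Bool σ), ∀ w, w ∈ M.accepts ↔ w ∈ L) ∧
      BooleanPoly f L ∧ ∀ f' : BOp, f' ≠ f → ¬ BooleanPoly f' L := by
  cases f with
  | c0 =>
    refine ⟨{w | blockOk S0 w = true}, Lblock_infinite S0 false false false (by decide),
      ⟨BSt, inferInstance, dfaOf S0 false .b0, fun w => accepts_block S0 false w⟩, ?_, ?_⟩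
    · intro w hw
      exact blockOk_map S0 false (by decide) w hw
    · intro f' hf' hp
      cases f' with
      | c0 => exact hf' rfl
      | c1 =>
        have := hp [false, false, false] (by decide)
        revert this; decide
      | and =>
        have := hp [false, true, true] (by decide) [true, false, true] (by decide) rfl
        revert this; decide
      | or =>
        have := hp [false, true, true] (by decide) [true, false, true] (by decide) rfl
        revert this; decide
      | maj =>
        have := hp [false, false, false] (by decide) [false, true, true] (by decide)
          [true, false, true] (by decide) rfl rfl
        revert this; decide
      | minor =>
        have := hp [false, false, false] (by decide) [false, true, true] (by decide)
          [true, false, true] (by decide) rfl rfl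
        revert this; decide
  | c1 =>
    refine ⟨{w | blockOk S1 w = true}, Lblock_infinite S1 true true true (by decide),
      ⟨BSt, inferInstance, dfaOf S1 false .b0, fun w => accepts_block S1 false w⟩, ?_, ?_⟩
    · intro w hw
      exact blockOk_map S1 true (by decide) w hw
    · intro f' hf' hp
      cases f' with
      | c1 => exact hf' rfl
      | c0 =>
        have := hp [true, true, true] (by decide)
        revert this; decide
      | and =>
        have := hp [true, false, false] (by decide) [false, true, false] (by decide) rfl
        revert this; decide
      | or =>
        have := hp [true, false, false] (by decide) [false, true, false] (by decide) rfl
        revert this; decide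
      | maj =>
        have := hp [true, true, true] (by decide) [true, false, false] (by decide)
          [false, true, false] (by decide) rfl rfl
        revert this; decide
      | minor =>
        have := hp [true, true, true] (by decide) [true, false, false] (by decide)
          [false, true, false] (by decide) rfl rfl
        revert this; decide
  | maj =>
    refine ⟨{w | blockOk Smaj w = true}, Lblock_infinite Smaj false false true (by decide),
      ⟨BSt, inferInstance, dfaOf Smaj false .b0, fun w => accepts_block Smaj false w⟩, ?_, ?_⟩
    · intro x hx y hy z hz hl1 hl2
      exact blockOk_zip3 Smaj (fun a b c => (a && b) || (a && c) || (b && c))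
        (by decide) x y z hl1 hl2 hx hy hz
    · intro f' hf' hp
      cases f' with
      | maj => exact hf' rfl
      | c0 =>
        have := hp [false, false, true] (by decide)
        revert this; decide
      | c1 =>
        have := hp [false, false, true] (by decide)
        revert this; decide
      | and =>
        have := hp [false, false, true] (by decide) [false, true, false] (by decide) rfl
        revert this; decide
      | or =>
        have := hp [false, false, true] (by decide) [false, true, false] (by decide) rfl
        revert this; decide
      | minor =>
        have := hp [false, false, true] (by decide) [false, true, false] (by decide)
          [true, true, false] (by decide) rfl rfl
        revert this; decide
  | and =>
    refine ⟨{w | headLang true Sand w = true},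
      Lhead_infinite Sand true false false false (by decide),
      ⟨BSt, inferInstance, dfaOf Sand true .start, fun w => accepts_head Sand true w⟩, ?_, ?_⟩
    · intro x hx y hy hl
      simp only [Set.mem_setOf_eq] at hx hy ⊢
      match x, y with
      | a :: x, a' :: y =>
        simp only [headLang, Bool.and_eq_true, beq_iff_eq] at hx hy
        obtain ⟨rfl, hx⟩ := hx
        obtain ⟨rfl, hy⟩ := hy
        simp only [List.zipWith, Bool.and_self, headLang, beq_self_eq_true, Bool.true_and]
        exact blockOk_zip2 Sand (· && ·) (by decide) x y (by simpa using hl) hx hy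
      | [], _ => simp [headLang] at hx
      | _ :: _, [] => simp [headLang] at hy
    · intro f' hf' hp
      cases f' with
      | and => exact hf' rfl
      | c0 =>
        have := hp [true, false, false, false] (by decide)
        revert this; decide
      | c1 =>
        have := hp [true, false, false, false] (by decide)
        revert this; decide
      | or =>
        have := hp [true, true, true, false] (by decide) [true, false, true, true] (by decide) rfl
        revert this; decide
      | maj =>
        have := hp [true, true, true, false] (by decide) [true, true, false, true] (by decide)
          [true, false, true, true] (by decide) rfl rfl
        revert this; decide
      | minor =>
        have := hp [true, true, true, false] (by decide) [true, false, true, true] (by decide)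
          [true, false, true, false] (by decide) rfl rfl
        revert this; decide
  | or =>
    refine ⟨{w | headLang false Sor w = true},
      Lhead_infinite Sor false true true true (by decide),
      ⟨BSt, inferInstance, dfaOf Sor false .start, fun w => accepts_head Sor false w⟩, ?_, ?_⟩
    · intro x hx y hy hl
      simp only [Set.mem_setOf_eq] at hx hy ⊢
      match x, y with
      | a :: x, a' :: y =>
        simp only [headLang, Bool.and_eq_true, beq_iff_eq] at hx hy
        obtain ⟨rfl, hx⟩ := hx
        obtain ⟨rfl, hy⟩ := hy
        simp only [List.zipWith, Bool.or_self, headLang, beq_self_eq_true, Bool.true_and]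
        exact blockOk_zip2 Sor (· || ·) (by decide) x y (by simpa using hl) hx hy
      | [], _ => simp [headLang] at hx
      | _ :: _, [] => simp [headLang] at hy
    · intro f' hf' hp
      cases f' with
      | or => exact hf' rfl
      | c0 =>
        have := hp [false, true, true, true] (by decide)
        revert this; decide
      | c1 =>
        have := hp [false, true, true, true] (by decide)
        revert this; decide
      | and =>
        have := hp [false, false, false, true] (by decide) [false, true, true, false] (by decide) rfl
        revert this; decide
      | maj =>
        have := hp [false, false, false, true] (by decide) [false, false, true, false] (by decide)
          [false, true, false, false] (by decide) rfl rfl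
        revert this; decide
      | minor =>
        have := hp [false, false, false, true] (by decide) [false, true, false, false] (by decide)
          [false, true, false, true] (by decide) rfl rfl
        revert this; decide
  | minor =>
    refine ⟨{w | List.foldl xor false w = true}, ?_,
      ⟨Bool, inferInstance, parDFA, fun w => Iff.rfl⟩, ?_, ?_⟩
    · apply Set.infinite_of_injective_forall_mem
        (f := fun n => true :: List.replicate n false)
      · intro m n hmn
        have := congrArg List.length hmn
        simpa using this
      · intro n
        simp only [Set.mem_setOf_eq, List.foldl]
        show List.foldl xor true (List.replicate n false) = true
        induction n with
        | zero => rfl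
        | succ k ih => simpa [List.replicate] using ih
    · intro x hx y hy z hz hl1 hl2
      simp only [Set.mem_setOf_eq] at hx hy hz ⊢
      have := foldl_xor3 x y z hl1 hl2 false false false
      simp only [hx, hy, hz] at this
      simpa using this
    · intro f' hf' hp
      cases f' with
      | minor => exact hf' rfl
      | c0 =>
        have := hp [true] (by decide)
        revert this; decide
      | c1 =>
        have := hp [true, false] (by decide)
        revert this; decide
      | and =>
        have := hp [true, false] (by decide) [false, true] (by decide) rfl
        revert this; decide
      | or =>
        have := hp [true, false] (by decide) [false, true] (by decide) rfl
        revert this; decide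
      | maj =>
        have := hp [true, false, false] (by decide) [false, true, false] (by decide)
          [false, false, true] (by decide) rfl rfl
        revert this; decide
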